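/- arXiv:2603.13442 — 3 statements merged into one kernel-verified Lean document; each statement's English description precedes it below -/
import Mathlib

section
/- If |ψ_i⟩ ∈ (C^{q_i})^{⊗n} for i = 1,…,m are states such that the regrouped tensor product ⊗_{i=1}^m |ψ_i⟩ is an AME(n, D) state with D = ∏_i q_i, then each |ψ_i⟩ is an AME(n, q_i) state. -/
noncomputable section

open Matrix Complex BigOperators

/-- Combine an assignment on `S` and on its complement into one on `Fin n`. -/
def glue {n : ℕ} {τ : Type*} (S : Finset (Fin n)) (a : {i // i ∈ S} → τ)
    (f : {i // i ∉ S} → τ) : Fin n → τ :=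
  fun i => if h : i ∈ S then a ⟨i, h⟩ else f ⟨i, h⟩

/-- The reduced density matrix of a pure state `ψ ∈ (ℂ^τ)^{⊗n}` on the parties in `S`
(tracing out the complement of `S`). -/
def rdm {n : ℕ} {τ : Type*} [Fintype τ] (S : Finset (Fin n))
    (ψ : (Fin n → τ) → ℂ) :
    Matrix ({i // i ∈ S} → τ) ({i // i ∈ S} → τ) ℂ :=
  Matrix.of fun a b =>
    ∑ f : {i // i ∉ S} → τ, ψ (glue S a f) * (starRingEnd ℂ) (ψ (glue S b f))

/-- `ψ` is an absolutely maximally entangled state: it is a unit vector and every reduction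
to `⌊n/2⌋` parties is maximally mixed. -/
def IsAME {n : ℕ} {τ : Type*} [Fintype τ] [DecidableEq τ] (ψ : (Fin n → τ) → ℂ) : Prop :=
  (∑ g, Complex.normSq (ψ g) = 1) ∧
  ∀ S : Finset (Fin n), S.card = n / 2 →
    rdm S ψ = ((Fintype.card τ : ℂ) ^ S.card)⁻¹ • (1 : Matrix _ _ ℂ)

/-- The regrouped tensor product of states `ψ i ∈ (ℂ^{q i})^{⊗n}`, viewed as a state on
`(⊗_i ℂ^{q i})^{⊗n}`. -/
def regroup {n m : ℕ} (q : Fin m → ℕ) (ψ : ∀ i, (Fin n → Fin (q i)) → ℂ) :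
    (Fin n → ∀ i, Fin (q i)) → ℂ :=
  fun g => ∏ i, ψ i fun k => g k i

/-- The `n`-fold tensor power `U^{⊗n}` of a matrix `U`. -/
def tpow {α β : Type*} (n : ℕ) (U : Matrix α β ℂ) : Matrix (Fin n → α) (Fin n → β) ℂ :=
  Matrix.of fun g f => ∏ k, U (g k) (f k)

-- trace lemma
lemma trace_rdm {n : ℕ} {τ : Type*} [Fintype τ] (S : Finset (Fin n))
    (ψ : (Fin n → τ) → ℂ) :
    ∑ a, rdm S ψ a a = ∑ g, (Complex.normSq (ψ g) : ℂ) := by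
  unfold rdm
  simp only [Matrix.of_apply, Complex.mul_conj]
  rw [← (Equiv.piEquivPiSubtypeProd (· ∈ S) fun _ => τ).symm.sum_comp, Fintype.sum_prod_type]
  rfl

-- glue commutes with coordinate projection
lemma glue_proj {n m : ℕ} {q : Fin m → ℕ} (S : Finset (Fin n))
    (a : {i // i ∈ S} → ∀ i, Fin (q i)) (f : {i // i ∉ S} → ∀ i, Fin (q i)) (i : Fin m) :
    (fun k => glue S a f k i) = glue S (fun k => a k i) (fun k => f k i) := by
  funext k
  unfold glue
  by_cases h : k ∈ S <;> simp [h]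

lemma rdm_regroup {n m : ℕ} (q : Fin m → ℕ) (ψ : ∀ i, (Fin n → Fin (q i)) → ℂ)
    (S : Finset (Fin n)) (a b : {i // i ∈ S} → ∀ i, Fin (q i)) :
    rdm S (regroup q ψ) a b
      = ∏ i, rdm S (ψ i) (fun k => a k i) (fun k => b k i) := by
  unfold rdm regroup
  simp only [Matrix.of_apply, map_prod]
  rw [Finset.prod_univ_sum]
  refine Fintype.sum_equiv (Equiv.piComm fun (i : Fin m) (k : {i // i ∉ S}) => Fin (q i)).symm _ _ fun f => ?_
  rw [← Finset.prod_mul_distrib]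
  refine Finset.prod_congr rfl fun i _ => ?_
  rw [glue_proj, glue_proj]
  rfl

/-- if the regrouped tensor product `⊗_i |ψ_i⟩` is an `AME(n, D)` state with
`D = ∏_i q_i`, then each `|ψ_i⟩` is an `AME(n, q_i)` state. -/
theorem AME_of_regroup_factors (n m : ℕ) (q : Fin m → ℕ)
    (ψ : ∀ i, (Fin n → Fin (q i)) → ℂ)
    (hnorm : ∀ i, ∑ g, Complex.normSq (ψ i g) = 1)
    (hAME : IsAME (regroup q ψ)) :
    ∀ i, IsAME (ψ i) := by
  intro j
  refine ⟨hnorm j, fun S hS => ?_⟩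
  -- the constant c
  set c : ℂ := ((Fintype.card (∀ i, Fin (q i)) : ℂ) ^ S.card)⁻¹ with hc_def
  -- the key identity from the AME hypothesis
  have key : ∀ a b : {i // i ∈ S} → ∀ i, Fin (q i),
      (∏ i, rdm S (ψ i) (fun k => a k i) (fun k => b k i))
        = c * (if a = b then 1 else 0) := by
    intro a b
    rw [← rdm_regroup, hAME.2 S hS]
    simp only [Matrix.smul_apply, Matrix.one_apply, smul_eq_mul, hc_def, Fintype.card_pi,
      Fintype.card_fin, Nat.cast_prod]
  -- each q i is positive when S is nonempty
  have hq : S.card ≠ 0 → ∀ i, q i ≠ 0 := by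
    intro hS0 i hqi
    obtain ⟨k, hk⟩ := Finset.card_ne_zero.mp hS0
    haveI : IsEmpty (Fin (q i)) := by rw [hqi]; infer_instance
    haveI : Nonempty (Fin n) := ⟨k⟩
    have := hnorm i
    simp [Finset.univ_eq_empty] at this
  have hc0 : c ≠ 0 := by
    rw [hc_def]
    apply inv_ne_zero
    rcases Nat.eq_zero_or_pos S.card with h0 | hpos
    · simp [h0]
    · apply pow_ne_zero
      simp only [Fintype.card_pi, Fintype.card_fin, Nat.cast_prod]
      exact Finset.prod_ne_zero_iff.mpr fun i _ =>
        Nat.cast_ne_zero.mpr (hq hpos.ne' i)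
  -- pick an arbitrary point in each factor's index type
  have hne : ∀ i, Nonempty ({k // k ∈ S} → Fin (q i)) := by
    intro i
    rcases Nat.eq_zero_or_pos S.card with h0 | hpos
    · have : S = ∅ := Finset.card_eq_zero.mp h0
      exact ⟨fun k => absurd k.2 (by simp [this])⟩
    · haveI : NeZero (q i) := ⟨hq hpos.ne' i⟩
      exact ⟨fun _ => 0⟩
  set d : ∀ i, {k // k ∈ S} → Fin (q i) := fun i => (hne i).some with hd
  set A : ({k // k ∈ S} → Fin (q j)) → ({k // k ∈ S} → ∀ i, Fin (q i)) :=
    fun α k i => Function.update d j α i k with hA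
  have hAj : ∀ α, (fun k => A α k j) = α := by
    intro α; funext k; simp [hA, Function.update_self]
  have hAi : ∀ α i, i ≠ j → (fun k => A α k i) = d i := by
    intro α i hij; funext k; simp [hA, Function.update_of_ne hij]
  set P : ℂ := ∏ i ∈ Finset.univ.erase j, rdm S (ψ i) (d i) (d i) with hP
  have hsplit : ∀ α β, (∏ i, rdm S (ψ i) (fun k => A α k i) (fun k => A β k i))
      = rdm S (ψ j) α β * P := by
    intro α β
    rw [← Finset.mul_prod_erase _ _ (Finset.mem_univ j), hAj, hAj]
    congr 1
    exact Finset.prod_congr rfl fun i hi =>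
      by rw [hAi _ _ (Finset.mem_erase.mp hi).1, hAi _ _ (Finset.mem_erase.mp hi).1]
  have hAinj : ∀ α β, A α = A β → α = β := by
    intro α β h
    rw [← hAj α, ← hAj β]
    funext k; rw [h]
  -- diagonal values are all equal to c / P
  have hdiag : ∀ α, rdm S (ψ j) α α * P = c := by
    intro α
    have := key (A α) (A α)
    rw [hsplit, if_pos rfl, mul_one] at this
    exact this
  have hP0 : P ≠ 0 := by
    obtain ⟨α⟩ := hne j
    intro h
    exact hc0 (by rw [← hdiag α, h, mul_zero])
  have hoff : ∀ α β, α ≠ β → rdm S (ψ j) α β = 0 := by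
    intro α β hab
    have := key (A α) (A β)
    rw [hsplit, if_neg (fun h => hab (hAinj _ _ h)), mul_zero] at this
    exact (mul_eq_zero.mp this).resolve_right hP0
  -- the common diagonal value
  set v : ℂ := c * P⁻¹ with hv
  have hdiag' : ∀ α, rdm S (ψ j) α α = v := by
    intro α
    rw [hv, ← hdiag α, mul_assoc, mul_inv_cancel₀ hP0, mul_one]
  -- trace is 1
  have htr : (Fintype.card ({k // k ∈ S} → Fin (q j)) : ℂ) * v = 1 := by
    have t := trace_rdm S (ψ j)
    rw [Finset.sum_congr rfl fun α _ => hdiag' α, Finset.sum_const,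
      Finset.card_univ, nsmul_eq_mul] at t
    rw [t]
    rw [← Complex.ofReal_sum, hnorm j, Complex.ofReal_one]
  have hvval : v = ((Fintype.card (Fin (q j)) : ℂ) ^ S.card)⁻¹ := by
    have : (Fintype.card ({k // k ∈ S} → Fin (q j)) : ℂ)
        = (Fintype.card (Fin (q j)) : ℂ) ^ S.card := by
      rw [Fintype.card_fun]
      push_cast
      rw [Fintype.card_coe]
    rw [← this]
    exact eq_inv_of_mul_eq_one_left (by rw [mul_comm]; exact htr)
  ext a b
  rw [Matrix.smul_apply, Matrix.one_apply]
  by_cases hab : a = b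
  · subst hab
    rw [if_pos rfl, smul_eq_mul, mul_one, hdiag' a, hvval]
  · rw [if_neg hab, smul_eq_mul, mul_zero, hoff a b hab]
end
end

section
/- If |ψ_i⟩ ∈ (C^{q_i})^{⊗n} is an AME(n, q_i) state for each i = 1,…,m, then the regrouped tensor product ⊗_{i=1}^m |ψ_i⟩, viewed as a state in (C^D)^{⊗n} with D = ∏_i q_i, is an AME(n, D) state. -/
noncomputable section

open Matrix Complex BigOperators

/-- Swap a sum over functions into `Π`-types with a product: sum–product exchange. -/
lemma sum_prod_swap {α : Type} [Fintype α] [DecidableEq α] {m : ℕ} {σ : Fin m → Type}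
    [∀ i, Fintype (σ i)] {β : Type} [CommSemiring β] (F : ∀ i, (α → σ i) → β) :
    ∑ f : α → ∀ i, σ i, ∏ i, F i (fun k => f k i) = ∏ i, ∑ h : α → σ i, F i h := by
  rw [Fintype.prod_sum]
  exact Fintype.sum_equiv
    { toFun := fun x k i => x i k, invFun := fun f i k => f k i,
      left_inv := fun _ => rfl, right_inv := fun _ => rfl } _ _ (fun x => rfl)

lemma glue_apply_pi {n : ℕ} {m : ℕ} {q : Fin m → ℕ} (S : Finset (Fin n))
    (a : {i // i ∈ S} → ∀ j, Fin (q j)) (f : {i // i ∉ S} → ∀ j, Fin (q j))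
    (j : Fin m) :
    (fun k => glue S a f k j) = glue S (fun s => a s j) (fun s => f s j) := by
  funext k
  unfold glue
  split <;> rfl

/-- if each `|ψ_i⟩` is an `AME(n, q_i)` state, then the regrouped tensor
product `⊗_i |ψ_i⟩`, viewed as a state in `(ℂ^D)^{⊗n}` with `D = ∏_i q_i`, is `AME(n, D)`. -/
theorem regroup_of_AME_factors (n m : ℕ) (q : Fin m → ℕ)
    (ψ : ∀ i, (Fin n → Fin (q i)) → ℂ)
    (hAME : ∀ i, IsAME (ψ i)) :
    IsAME (regroup q ψ) := by
  constructor
  · have : ∀ g : Fin n → ∀ i, Fin (q i),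
        Complex.normSq (regroup q ψ g) = ∏ i, Complex.normSq (ψ i fun k => g k i) := by
      intro g
      simp only [regroup]
      exact map_prod (Complex.normSq : ℂ →*₀ ℝ) _ Finset.univ
    simp_rw [this]
    rw [sum_prod_swap (fun i h => Complex.normSq (ψ i h))]
    exact Finset.prod_eq_one fun i _ => (hAME i).1
  · intro S hS
    ext a b
    have hentry :
        rdm S (regroup q ψ) a b
          = ∏ i, rdm S (ψ i) (fun s => a s i) (fun s => b s i) := by
      have : ∀ f : {i // i ∉ S} → ∀ j, Fin (q j),
          regroup q ψ (glue S a f) * (starRingEnd ℂ) (regroup q ψ (glue S b f))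
          = ∏ i, (ψ i (glue S (fun s => a s i) (fun s => f s i)) *
              (starRingEnd ℂ) (ψ i (glue S (fun s => b s i) (fun s => f s i)))) := by
        intro f
        rw [Finset.prod_mul_distrib]
        simp only [regroup, map_prod]
        congr 1 <;> exact Finset.prod_congr rfl fun i _ => by rw [glue_apply_pi]
      simp only [rdm, Matrix.of_apply]
      rw [Finset.sum_congr rfl fun f _ => this f]
      exact sum_prod_swap (fun i h =>
        ψ i (glue S (fun s => a s i) h) * (starRingEnd ℂ) (ψ i (glue S (fun s => b s i) h)))
    rw [hentry]
    have hrdm : ∀ i, rdm S (ψ i) (fun s => a s i) (fun s => b s i)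
        = ((q i : ℂ) ^ S.card)⁻¹ *
          (if (fun s => a s i) = (fun s => b s i) then 1 else 0) := by
      intro i
      rw [(hAME i).2 S hS]
      simp [Matrix.smul_apply, Matrix.one_apply]
    simp_rw [hrdm]
    rw [Finset.prod_mul_distrib]
    have hδ : (∏ i, (if (fun s => a s i) = (fun s => b s i) then (1 : ℂ) else 0))
        = if a = b then 1 else 0 := by
      by_cases h : a = b
      · subst h; simp
      · rw [if_neg h]
        obtain ⟨s, hs⟩ : ∃ s, a s ≠ b s := by
          by_contra hc
          push_neg at hc
          exact h (funext hc)
        obtain ⟨i, hi⟩ : ∃ i, a s i ≠ b s i := by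
          by_contra hc
          push_neg at hc
          exact hs (funext hc)
        refine Finset.prod_eq_zero (Finset.mem_univ i) ?_
        rw [if_neg]
        intro hcongr
        exact hi (congrFun hcongr s)
    rw [hδ]
    have hcard : (Fintype.card (∀ i, Fin (q i)) : ℂ) = ∏ i, (q i : ℂ) := by
      simp [Fintype.card_pi]
    simp only [Matrix.smul_apply, Matrix.one_apply, smul_eq_mul, hcard]
    rw [← Finset.prod_pow, ← Finset.prod_inv_distrib]
end
end

section
/- No AME(4,2) state exists: there is no pure state |Ψ⟩ ∈ (C²)^{⊗4} such that all six two-qubit reduced density matrices equal I/4. -/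
noncomputable section

open Matrix Complex BigOperators

namespace HS

open Finset

lemma glue_mem {n : ℕ} {τ : Type*} (S : Finset (Fin n)) (a : {i // i ∈ S} → τ)
    (f : {i // i ∉ S} → τ) {i : Fin n} (h : i ∈ S) : glue S a f i = a ⟨i, h⟩ := dif_pos h

lemma glue_not_mem {n : ℕ} {τ : Type*} (S : Finset (Fin n)) (a : {i // i ∈ S} → τ)
    (f : {i // i ∉ S} → τ) {i : Fin n} (h : i ∉ S) : glue S a f i = f ⟨i, h⟩ := dif_neg h

/-- `glue` as an equivalence. -/
def gEquiv {n : ℕ} {τ : Type*} (S : Finset (Fin n)) :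
    (({i // i ∈ S} → τ) × ({i // i ∉ S} → τ)) ≃ (Fin n → τ) where
  toFun p := glue S p.1 p.2
  invFun g := (fun i => g i.1, fun i => g i.1)
  left_inv p := by
    refine Prod.ext (funext fun i => ?_) (funext fun i => ?_)
    · exact glue_mem S p.1 p.2 i.2
    · exact glue_not_mem S p.1 p.2 i.2
  right_inv g := by
    funext i
    by_cases h : i ∈ S
    · exact glue_mem S _ _ h
    · exact glue_not_mem S _ _ h

abbrev V := Fin 4 → Fin 2

/-- The combinatorial compatibility condition. -/
def CC (T : Finset (Fin 4)) (g h g' h' : V) : Prop :=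
  ∀ i : Fin 4, (i ∈ T → (g i = h' i ∧ h i = g' i)) ∧ (i ∉ T → (g i = h i ∧ g' i = h' i))

instance (T : Finset (Fin 4)) (g h g' h' : V) : Decidable (CC T g h g' h') := by
  unfold CC; infer_instance

/-- The expanded form of `Tr (ρ_T²)`. -/
def Tt (T : Finset (Fin 4)) (ψ : V → ℂ) : ℂ :=
  ∑ g : V, ∑ h : V, ∑ g' : V, ∑ h' : V,
    (if CC T g h g' h' then (1 : ℂ) else 0) *
      (ψ g * (starRingEnd ℂ) (ψ h) * (ψ g' * (starRingEnd ℂ) (ψ h')))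

lemma CC_glue_iff (S : Finset (Fin 4)) (a b c d : {i // i ∈ S} → Fin 2)
    (f u v w : {i // i ∉ S} → Fin 2) :
    CC S (glue S a f) (glue S b u) (glue S c v) (glue S d w) ↔
      (w = v ∧ d = a ∧ u = f ∧ c = b) := by
  constructor
  · intro H
    refine ⟨funext fun k => ?_, funext fun k => ?_, funext fun k => ?_, funext fun k => ?_⟩
    · have := ((H k.1).2 k.2).2
      rw [glue_not_mem S c v k.2, glue_not_mem S d w k.2] at this
      exact this.symm
    · have := ((H k.1).1 k.2).1
      rw [glue_mem S a f k.2, glue_mem S d w k.2] at this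
      exact this.symm
    · have := ((H k.1).2 k.2).1
      rw [glue_not_mem S a f k.2, glue_not_mem S b u k.2] at this
      exact this.symm
    · have := ((H k.1).1 k.2).2
      rw [glue_mem S b u k.2, glue_mem S c v k.2] at this
      exact this.symm
  · rintro ⟨rfl, rfl, rfl, rfl⟩
    intro i
    constructor
    · intro hi
      rw [glue_mem _ _ _ hi, glue_mem _ _ _ hi, glue_mem _ _ _ hi, glue_mem _ _ _ hi]
      exact ⟨rfl, rfl⟩
    · intro hi
      rw [glue_not_mem _ _ _ hi, glue_not_mem _ _ _ hi, glue_not_mem _ _ _ hi,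
        glue_not_mem _ _ _ hi]
      exact ⟨rfl, rfl⟩

lemma trsq_eq_Tt (S : Finset (Fin 4)) (ψ : V → ℂ) :
    (∑ a : {i // i ∈ S} → Fin 2, ∑ b : {i // i ∈ S} → Fin 2,
      rdm S ψ a b * rdm S ψ b a) = Tt S ψ := by
  have step1 : Tt S ψ =
      ∑ p : ({i // i ∈ S} → Fin 2) × ({i // i ∉ S} → Fin 2),
      ∑ q : ({i // i ∈ S} → Fin 2) × ({i // i ∉ S} → Fin 2),
      ∑ r : ({i // i ∈ S} → Fin 2) × ({i // i ∉ S} → Fin 2),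
      ∑ s : ({i // i ∈ S} → Fin 2) × ({i // i ∉ S} → Fin 2),
        (if CC S (gEquiv S p) (gEquiv S q) (gEquiv S r) (gEquiv S s) then (1 : ℂ) else 0) *
          (ψ (gEquiv S p) * (starRingEnd ℂ) (ψ (gEquiv S q)) *
            (ψ (gEquiv S r) * (starRingEnd ℂ) (ψ (gEquiv S s)))) := by
    rw [Tt]
    symm
    apply Fintype.sum_equiv (gEquiv S)
    intro p
    apply Fintype.sum_equiv (gEquiv S)
    intro q
    apply Fintype.sum_equiv (gEquiv S)
    intro r
    apply Fintype.sum_equiv (gEquiv S)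
    intro s
    rfl
  rw [step1]
  have gapp : ∀ (p : ({i // i ∈ S} → Fin 2) × ({i // i ∉ S} → Fin 2)),
      gEquiv S p = glue S p.1 p.2 := fun _ => rfl
  simp only [Fintype.sum_prod_type, gapp, CC_glue_iff]
  simp only [ite_mul, zero_mul, one_mul, ite_and]
  simp only [Finset.sum_ite_irrel, Finset.sum_ite_eq', Finset.mem_univ, if_true,
    Finset.sum_const_zero]
  unfold rdm
  simp only [Matrix.of_apply]
  simp_rw [Finset.sum_mul_sum]
  refine Finset.sum_congr rfl fun a _ => ?_
  rw [Finset.sum_comm]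

lemma cond_glue_iff (S : Finset (Fin 4)) (a b a' b' : {i // i ∈ S} → Fin 2)
    (f u : {i // i ∉ S} → Fin 2) :
    ((∀ k : {i // i ∈ S}, glue S a' f k = a k ∧ glue S b' u k = b k) ∧
      (∀ i, i ∉ S → glue S a' f i = glue S b' u i)) ↔ (u = f ∧ b' = b ∧ a' = a) := by
  constructor
  · rintro ⟨h1, h2⟩
    refine ⟨funext fun k => ?_, funext fun k => ?_, funext fun k => ?_⟩
    · have := h2 k.1 k.2
      rw [glue_not_mem S a' f k.2, glue_not_mem S b' u k.2] at this
      exact this.symm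
    · have := (h1 k).2
      rwa [glue_mem S b' u k.2] at this
    · have := (h1 k).1
      rwa [glue_mem S a' f k.2] at this
  · rintro ⟨rfl, rfl, rfl⟩
    refine ⟨fun k => ?_, fun i hi => ?_⟩
    · rw [glue_mem S a' u k.2, glue_mem S b' u k.2]
      exact ⟨rfl, rfl⟩
    · rw [glue_not_mem S a' u hi, glue_not_mem S b' u hi]

lemma rdm_expand (S : Finset (Fin 4)) (ψ : V → ℂ) (a b : {i // i ∈ S} → Fin 2) :
    rdm S ψ a b = ∑ g : V, ∑ h : V,
      (if (∀ k : {i // i ∈ S}, g k = a k ∧ h k = b k) ∧ (∀ i, i ∉ S → g i = h i)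
        then (1 : ℂ) else 0) * (ψ g * (starRingEnd ℂ) (ψ h)) := by
  have step1 : (∑ g : V, ∑ h : V,
      (if (∀ k : {i // i ∈ S}, g k = a k ∧ h k = b k) ∧ (∀ i, i ∉ S → g i = h i)
        then (1 : ℂ) else 0) * (ψ g * (starRingEnd ℂ) (ψ h))) =
      ∑ p : ({i // i ∈ S} → Fin 2) × ({i // i ∉ S} → Fin 2),
      ∑ q : ({i // i ∈ S} → Fin 2) × ({i // i ∉ S} → Fin 2),
        (if (∀ k : {i // i ∈ S}, gEquiv S p k = a k ∧ gEquiv S q k = b k) ∧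
            (∀ i, i ∉ S → gEquiv S p i = gEquiv S q i)
          then (1 : ℂ) else 0) * (ψ (gEquiv S p) * (starRingEnd ℂ) (ψ (gEquiv S q))) := by
    symm
    apply Fintype.sum_equiv (gEquiv S)
    intro p
    apply Fintype.sum_equiv (gEquiv S)
    intro q
    rfl
  rw [rdm]
  simp only [Matrix.of_apply]
  rw [step1]
  have gapp : ∀ (p : ({i // i ∈ S} → Fin 2) × ({i // i ∉ S} → Fin 2)),
      gEquiv S p = glue S p.1 p.2 := fun _ => rfl
  simp only [Fintype.sum_prod_type, gapp, cond_glue_iff]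
  simp only [ite_mul, zero_mul, one_mul, ite_and]
  simp only [Finset.sum_ite_irrel, Finset.sum_ite_eq', Finset.mem_univ, if_true,
    Finset.sum_const_zero]

lemma sum_diag (x y : Fin 2) :
    ∑ c : Fin 2, (if (x = c ∧ y = c) then (1 : ℂ) else 0) = if x = y then 1 else 0 := by
  fin_cases x <;> fin_cases y <;> simp [Fin.sum_univ_two] <;> decide

lemma rdm_singleton (ψ : V → ℂ) (hA : IsAME ψ) (i : Fin 4) :
    rdm {i} ψ = ((2 : ℂ))⁻¹ • (1 : Matrix _ _ ℂ) := by
  obtain ⟨j, hij⟩ := exists_ne i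
  have hiS : i ∈ ({i, j} : Finset (Fin 4)) := Finset.mem_insert_self i {j}
  have hjS : j ∈ ({i, j} : Finset (Fin 4)) := by simp
  have hS2 : ({i, j} : Finset (Fin 4)).card = 2 := by
    rw [Finset.card_insert_of_notMem (by simpa using hij.symm), Finset.card_singleton]
  have hpair := hA.2 {i, j} (by rw [hS2])
  rw [hS2] at hpair
  have hc : ((Fintype.card (Fin 2) : ℂ) ^ 2)⁻¹ = (4 : ℂ)⁻¹ := by norm_num
  rw [hc] at hpair
  ext a b
  set α := a ⟨i, Finset.mem_singleton_self i⟩ with hα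
  set β := b ⟨i, Finset.mem_singleton_self i⟩ with hβ
  have key : rdm ({i} : Finset (Fin 4)) ψ a b
      = ∑ c : Fin 2, rdm {i, j} ψ (fun k => if (k : Fin 4) = i then α else c)
          (fun k => if (k : Fin 4) = i then β else c) := by
    rw [rdm_expand]
    simp only [rdm_expand]
    conv_rhs => rw [Finset.sum_comm]
    refine Finset.sum_congr rfl fun g _ => ?_
    conv_rhs => rw [Finset.sum_comm]
    refine Finset.sum_congr rfl fun h _ => ?_
    rw [← Finset.sum_mul]
    congr 1
    have hC2 : ∀ c : Fin 2,
        ((∀ k : {k // k ∈ ({i, j} : Finset (Fin 4))},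
            g k = (if (k : Fin 4) = i then α else c) ∧
            h k = (if (k : Fin 4) = i then β else c)) ∧
          (∀ l, l ∉ ({i, j} : Finset (Fin 4)) → g l = h l)) ↔
        ((g j = c ∧ h j = c) ∧ ((g i = α ∧ h i = β) ∧
          (∀ l, l ∉ ({i, j} : Finset (Fin 4)) → g l = h l))) := by
      intro c
      constructor
      · rintro ⟨h1, h2⟩
        have e1 := h1 ⟨i, hiS⟩
        have e2 := h1 ⟨j, hjS⟩
        simp only [if_pos rfl] at e1
        rw [if_neg hij, if_neg hij] at e2
        exact ⟨e2, e1, h2⟩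
      · rintro ⟨⟨e3, e4⟩, ⟨e1, e2⟩, h2⟩
        refine ⟨fun k => ?_, h2⟩
        rcases Finset.mem_insert.mp k.2 with hk | hk
        · constructor <;> simp [hk, e1, e2]
        · have hk' : (k : Fin 4) = j := Finset.mem_singleton.mp hk
          constructor <;> simp [hk', hij, e3, e4]
    have hC1 : ((∀ k : {k // k ∈ ({i} : Finset (Fin 4))},
          g k = a k ∧ h k = b k) ∧
        (∀ l, l ∉ ({i} : Finset (Fin 4)) → g l = h l)) ↔
        ((g j = h j) ∧ ((g i = α ∧ h i = β) ∧
          (∀ l, l ∉ ({i, j} : Finset (Fin 4)) → g l = h l))) := by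
      constructor
      · rintro ⟨h1, h2⟩
        have e1 := h1 ⟨i, Finset.mem_singleton_self i⟩
        refine ⟨h2 j (by simpa using hij), ⟨e1.1, e1.2⟩, fun l hl => h2 l ?_⟩
        simp only [Finset.mem_insert, Finset.mem_singleton, not_or] at hl
        simpa using hl.1
      · rintro ⟨e5, ⟨e1, e2⟩, h3⟩
        constructor
        · intro k
          have hk : (k : Fin 4) = i := Finset.mem_singleton.mp k.2
          have hk2 : k = ⟨i, Finset.mem_singleton_self i⟩ := Subtype.ext hk
          rw [hk2]
          exact ⟨by simpa [hk2] using e1, by simpa [hk2] using e2⟩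
        · intro l hl
          have hli : l ≠ i := by simpa using hl
          by_cases hlj : l = j
          · rw [hlj]; exact e5
          · exact h3 l (by simp [hli, hlj])
    simp only [hC2, hC1]
    simp only [ite_and, Finset.sum_ite_irrel, sum_diag, Finset.sum_const_zero]
    by_cases h5 : g j = h j
    · simp [h5]
    · have h5' : ¬ h j = g j := fun e => h5 e.symm
      simp [h5, h5']
  rw [key, hpair]
  have hab : ∀ c : Fin 2,
      ((fun k : {k // k ∈ ({i, j} : Finset (Fin 4))} =>
        if (k : Fin 4) = i then α else c) =
       (fun k : {k // k ∈ ({i, j} : Finset (Fin 4))} =>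
        if (k : Fin 4) = i then β else c))
        ↔ α = β := by
    intro c
    constructor
    · intro hfe
      have := congrFun hfe ⟨i, hiS⟩
      simpa using this
    · intro hfe
      funext k
      rw [hfe]
  have habs : (a = b) ↔ α = β := by
    constructor
    · intro hfe; rw [hα, hβ, hfe]
    · intro hfe
      funext k
      have hk2 : k = ⟨i, Finset.mem_singleton_self i⟩ :=
        Subtype.ext (Finset.mem_singleton.mp k.2)
      rw [hk2]; exact hfe
  simp only [Matrix.smul_apply, Matrix.one_apply, smul_eq_mul, hab, habs]
  by_cases hd : α = β <;> simp [hd, Fin.sum_univ_two] <;> norm_num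

lemma mul_conj_ite (P Q : Prop) [Decidable P] [Decidable Q] :
    (if P then (1 : ℂ) else 0) * (if Q then (1 : ℂ) else 0) = if P ∧ Q then 1 else 0 := by
  by_cases hP : P <;> by_cases hQ : Q <;> simp [hP, hQ]

lemma norm_one {ψ : V → ℂ} (hn : ∑ g, Complex.normSq (ψ g) = 1) :
    (∑ g : V, ψ g * (starRingEnd ℂ) (ψ g)) = 1 := by
  rw [← Complex.ofReal_one, ← hn]
  push_cast
  exact Finset.sum_congr rfl fun g _ => (Complex.mul_conj _)

lemma trsq_of_scalar (S : Finset (Fin 4)) (ψ : V → ℂ) (c : ℂ)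
    (h : rdm S ψ = c • (1 : Matrix _ _ ℂ)) :
    Tt S ψ = (2 : ℂ) ^ S.card * c ^ 2 := by
  rw [← trsq_eq_Tt, h]
  have hcard : Fintype.card ({i // i ∈ S} → Fin 2) = 2 ^ S.card := by
    rw [Fintype.card_fun, Fintype.card_fin, Fintype.card_coe]
  simp only [Matrix.smul_apply, Matrix.one_apply, smul_eq_mul, mul_ite, mul_one, mul_zero,
    ite_mul, zero_mul]
  simp only [Finset.sum_ite_irrel, Finset.sum_ite_eq, Finset.sum_ite_eq', Finset.mem_univ,
    if_true, Finset.sum_const_zero, Finset.sum_const, Finset.card_univ, hcard,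
    nsmul_eq_mul]
  push_cast
  ring

lemma CC_empty (g h g' h' : V) : CC ∅ g h g' h' ↔ (g = h ∧ g' = h') := by
  constructor
  · intro H
    exact ⟨funext fun i => ((H i).2 (by simp)).1, funext fun i => ((H i).2 (by simp)).2⟩
  · rintro ⟨rfl, rfl⟩ i
    exact ⟨fun hi => absurd hi (by simp), fun _ => ⟨rfl, rfl⟩⟩

lemma Tt_empty {ψ : V → ℂ} (hn : ∑ g, Complex.normSq (ψ g) = 1) : Tt ∅ ψ = 1 := by
  rw [Tt]
  simp only [CC_empty, ite_and, ite_mul, zero_mul, one_mul]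
  simp only [Finset.sum_ite_irrel, Finset.sum_ite_eq, Finset.sum_ite_eq', Finset.mem_univ,
    if_true, Finset.sum_const_zero]
  rw [← Finset.sum_mul_sum, norm_one hn, one_mul]

lemma CC_univ (g h g' h' : V) :
    CC Finset.univ g h g' h' ↔ (g' = h ∧ h' = g) := by
  constructor
  · intro H
    refine ⟨funext fun i => ?_, funext fun i => ?_⟩
    · exact ((H i).1 (Finset.mem_univ i)).2.symm
    · exact ((H i).1 (Finset.mem_univ i)).1.symm
  · rintro ⟨rfl, rfl⟩ i
    exact ⟨fun _ => ⟨rfl, rfl⟩, fun hi => absurd (Finset.mem_univ i) hi⟩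

lemma Tt_univ {ψ : V → ℂ} (hn : ∑ g, Complex.normSq (ψ g) = 1) :
    Tt Finset.univ ψ = 1 := by
  rw [Tt]
  simp only [CC_univ, ite_and, ite_mul, zero_mul, one_mul]
  simp only [Finset.sum_ite_irrel, Finset.sum_ite_eq, Finset.sum_ite_eq', Finset.mem_univ,
    if_true, Finset.sum_const_zero]
  have : ∀ g h : V, ψ g * (starRingEnd ℂ) (ψ h) * (ψ h * (starRingEnd ℂ) (ψ g))
      = (ψ g * (starRingEnd ℂ) (ψ g)) * (ψ h * (starRingEnd ℂ) (ψ h)) := fun g h => by ring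
  simp_rw [this]
  rw [← Finset.sum_mul_sum, norm_one hn, one_mul]

lemma CC_compl (T : Finset (Fin 4)) (g h g' h' : V) :
    CC Tᶜ g h g' h' ↔ CC T g h' g' h := by
  constructor
  · intro H i
    refine ⟨fun hi => ?_, fun hi => ?_⟩
    · have := (H i).2 (by simp [hi])
      exact ⟨this.1, this.2.symm⟩
    · have := (H i).1 (by simp [hi])
      exact ⟨this.1, this.2.symm⟩
  · intro H i
    refine ⟨fun hi => ?_, fun hi => ?_⟩
    · have hi' : i ∉ T := by simpa using hi
      have := (H i).2 hi'
      exact ⟨this.1, this.2.symm⟩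
    · have hi' : i ∈ T := by simpa using hi
      have := (H i).1 hi'
      exact ⟨this.1, this.2.symm⟩

lemma Tt_compl (T : Finset (Fin 4)) (ψ : V → ℂ) : Tt Tᶜ ψ = Tt T ψ := by
  unfold Tt
  refine Finset.sum_congr rfl fun g _ => ?_
  rw [Finset.sum_comm]
  conv_rhs => rw [Finset.sum_comm]
  refine Finset.sum_congr rfl fun g' _ => ?_
  rw [Finset.sum_comm]
  refine Finset.sum_congr rfl fun x _ => ?_
  refine Finset.sum_congr rfl fun y _ => ?_
  simp only [CC_compl]
  ring

lemma Tt_card1 {ψ : V → ℂ} (hA : IsAME ψ) {T : Finset (Fin 4)} (hT : T.card = 1) :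
    Tt T ψ = 2⁻¹ := by
  obtain ⟨i, rfl⟩ := Finset.card_eq_one.mp hT
  rw [trsq_of_scalar _ ψ _ (rdm_singleton ψ hA i), Finset.card_singleton]
  norm_num

lemma Tt_card2 {ψ : V → ℂ} (hA : IsAME ψ) {T : Finset (Fin 4)} (hT : T.card = 2) :
    Tt T ψ = 4⁻¹ := by
  have hp := hA.2 T (by rw [hT])
  rw [hT] at hp
  have : ((Fintype.card (Fin 2) : ℂ) ^ 2)⁻¹ = 4⁻¹ := by norm_num
  rw [this] at hp
  rw [trsq_of_scalar _ ψ _ hp, hT]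
  norm_num

lemma Tt_card3 {ψ : V → ℂ} (hA : IsAME ψ) {T : Finset (Fin 4)} (hT : T.card = 3) :
    Tt T ψ = 2⁻¹ := by
  rw [← compl_compl T, Tt_compl]
  exact Tt_card1 hA (by rw [Finset.card_compl, hT]; rfl)

lemma Tt_card0 {ψ : V → ℂ} (hA : IsAME ψ) {T : Finset (Fin 4)} (hT : T.card = 0) :
    Tt T ψ = 1 := by
  rw [Finset.card_eq_zero.mp hT]
  exact Tt_empty hA.1

lemma Tt_card4 {ψ : V → ℂ} (hA : IsAME ψ) {T : Finset (Fin 4)} (hT : T.card = 4) :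
    Tt T ψ = 1 := by
  have : T = Finset.univ := Finset.eq_univ_of_card T (by rw [hT]; rfl)
  rw [this]
  exact Tt_univ hA.1

/-- Bit flip. -/
def flp : Fin 2 → Fin 2 := fun x => if x = 0 then 1 else 0

/-- Sign of a bit. -/
def eps : Fin 2 → ℂ := fun x => if x = 0 then 1 else -1

/-- Sign of a bit string. -/
def Eg (g : V) : ℂ := ∏ i, eps (g i)

/-- Flip of a bit string. -/
def Fl (g : V) : V := fun i => flp (g i)

/-- The "spin-flip overlap" `⟨ψ|Y⊗Y⊗Y⊗Y|ψ̄⟩`. -/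
def Z (ψ : V → ℂ) : ℂ := ∑ g : V, Eg g * (ψ g * ψ (Fl g))

lemma W_sum (g h g' h' : V) :
    (∑ T : Finset (Fin 4), ((-1 : ℂ) ^ T.card * (if CC T g h g' h' then 1 else 0))) =
    ∏ i : Fin 4, ((-(if g i = h' i ∧ h i = g' i then (1 : ℂ) else 0)) +
      (if g i = h i ∧ g' i = h' i then (1 : ℂ) else 0)) := by
  rw [Finset.prod_add, Finset.powerset_univ]
  refine Finset.sum_congr rfl fun T _ => ?_
  have h1 : (∏ i ∈ T, (-(if g i = h' i ∧ h i = g' i then (1 : ℂ) else 0)))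
      = (-1 : ℂ) ^ T.card * ∏ i ∈ T, (if g i = h' i ∧ h i = g' i then (1 : ℂ) else 0) := by
    have : ∀ i : Fin 4, (-(if g i = h' i ∧ h i = g' i then (1 : ℂ) else 0))
        = (-1 : ℂ) * (if g i = h' i ∧ h i = g' i then (1 : ℂ) else 0) := fun i => by ring
    rw [Finset.prod_congr rfl fun i _ => this i, Finset.prod_mul_distrib, Finset.prod_const]
  rw [h1, Finset.prod_boole, Finset.prod_boole, mul_assoc, mul_conj_ite]
  congr 1
  have hiff : ((∀ i ∈ T, (g i = h' i ∧ h i = g' i)) ∧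
      (∀ i ∈ Finset.univ \ T, (g i = h i ∧ g' i = h' i))) ↔ CC T g h g' h' := by
    constructor
    · rintro ⟨hin, hout⟩ i
      exact ⟨fun hi => hin i hi, fun hi => hout i (by simp [hi])⟩
    · intro H
      exact ⟨fun i hi => (H i).1 hi, fun i hi => (H i).2 (by simpa using hi)⟩
  simp only [hiff]

lemma site_id (x y z w : Fin 2) :
    ((-(if x = w ∧ y = z then (1 : ℂ) else 0)) + (if x = y ∧ z = w then (1 : ℂ) else 0)) =
    if (y = flp w ∧ z = flp x) then -(eps x * eps w) else 0 := by
  fin_cases x <;> fin_cases y <;> fin_cases z <;> fin_cases w <;>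
    norm_num [flp, eps]

lemma prod_ite_zero (P : Fin 4 → Prop) [DecidablePred P] (v : Fin 4 → ℂ) :
    (∏ i, if P i then v i else 0) = if (∀ i, P i) then ∏ i, v i else 0 := by
  by_cases H : ∀ i, P i
  · simp [H]
  · rw [if_neg H]
    obtain ⟨i, hi⟩ := not_forall.mp H
    exact Finset.prod_eq_zero (Finset.mem_univ i) (if_neg hi)

lemma eps_flp (x : Fin 2) : eps (flp x) = -eps x := by
  fin_cases x <;> simp [flp, eps]

lemma conj_eps (x : Fin 2) : (starRingEnd ℂ) (eps x) = eps x := by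
  fin_cases x <;> simp [eps]

lemma conj_Eg (g : V) : (starRingEnd ℂ) (Eg g) = Eg g := by
  rw [Eg, map_prod]
  exact Finset.prod_congr rfl fun i _ => conj_eps _

lemma Eg_Fl (g : V) : Eg (Fl g) = Eg g := by
  rw [Eg, Eg]
  have : ∀ i : Fin 4, eps (Fl g i) = (-1 : ℂ) * eps (g i) := fun i => by
    rw [show Fl g i = flp (g i) from rfl, eps_flp]; ring
  rw [Finset.prod_congr rfl fun i _ => this i, Finset.prod_mul_distrib, Finset.prod_const]
  norm_num

lemma coef_eq (g h g' h' : V) :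
    (∑ T : Finset (Fin 4), ((-1 : ℂ) ^ T.card * (if CC T g h g' h' then 1 else 0))) =
    if (g' = Fl g ∧ h' = Fl h) then Eg g * Eg h' else 0 := by
  rw [W_sum]
  simp_rw [site_id]
  rw [prod_ite_zero (fun i => (h i = flp (h' i) ∧ g' i = flp (g i)))
    (fun i => -(eps (g i) * eps (h' i)))]
  have hval : (∏ i : Fin 4, -(eps (g i) * eps (h' i))) = Eg g * Eg h' := by
    have : ∀ i : Fin 4, -(eps (g i) * eps (h' i))
        = (-1 : ℂ) * (eps (g i) * eps (h' i)) := fun i => by ring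
    rw [Finset.prod_congr rfl fun i _ => this i, Finset.prod_mul_distrib, Finset.prod_const,
      Finset.prod_mul_distrib]
    rw [Eg, Eg]
    norm_num
  rw [hval]
  have hcond : (∀ i, (h i = flp (h' i) ∧ g' i = flp (g i))) ↔ (g' = Fl g ∧ h' = Fl h) := by
    have hflip : ∀ x y : Fin 2, x = flp y ↔ y = flp x := by decide
    rw [forall_and]
    constructor
    · rintro ⟨H1, H2⟩
      exact ⟨funext fun i => H2 i, funext fun i => (hflip _ _).mp (H1 i)⟩
    · rintro ⟨rfl, rfl⟩
      exact ⟨fun i => (hflip _ _).mpr rfl, fun i => rfl⟩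
  exact if_congr hcond rfl rfl

lemma main_id (ψ : V → ℂ) :
    (∑ T : Finset (Fin 4), ((-1 : ℂ) ^ T.card * Tt T ψ)) =
      Z ψ * (starRingEnd ℂ) (Z ψ) := by
  have lhs : (∑ T : Finset (Fin 4), ((-1 : ℂ) ^ T.card * Tt T ψ)) =
      ∑ g : V, ∑ h : V, ∑ g' : V, ∑ h' : V,
        (if (g' = Fl g ∧ h' = Fl h) then Eg g * Eg h' else 0) *
          (ψ g * (starRingEnd ℂ) (ψ h) * (ψ g' * (starRingEnd ℂ) (ψ h'))) := by
    unfold Tt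
    simp_rw [Finset.mul_sum]
    rw [Finset.sum_comm]
    refine Finset.sum_congr rfl fun g _ => ?_
    rw [Finset.sum_comm]
    refine Finset.sum_congr rfl fun h _ => ?_
    rw [Finset.sum_comm]
    refine Finset.sum_congr rfl fun g' _ => ?_
    rw [Finset.sum_comm]
    refine Finset.sum_congr rfl fun h' _ => ?_
    have hre : ∀ T : Finset (Fin 4), (-1 : ℂ) ^ T.card *
        ((if CC T g h g' h' then 1 else 0) *
          (ψ g * (starRingEnd ℂ) (ψ h) * (ψ g' * (starRingEnd ℂ) (ψ h')))) =
        ((-1 : ℂ) ^ T.card * (if CC T g h g' h' then 1 else 0)) *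
          (ψ g * (starRingEnd ℂ) (ψ h) * (ψ g' * (starRingEnd ℂ) (ψ h'))) := fun T => by ring
    rw [Finset.sum_congr rfl fun T _ => hre T, ← Finset.sum_mul, coef_eq]
  rw [lhs]
  simp only [ite_and, ite_mul, zero_mul]
  simp only [Finset.sum_ite_irrel, Finset.sum_ite_eq', Finset.mem_univ, if_true,
    Finset.sum_const_zero]
  rw [Z, map_sum, Finset.sum_mul_sum]
  refine Finset.sum_congr rfl fun g _ => ?_
  refine Finset.sum_congr rfl fun h _ => ?_
  simp only [_root_.map_mul, conj_Eg]
  rw [Eg_Fl]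
  ring

lemma final_sum {ψ : V → ℂ} (hA : IsAME ψ) :
    (∑ T : Finset (Fin 4), ((-1 : ℂ) ^ T.card * Tt T ψ)) = -2⁻¹ := by
  have hval : ∀ T : Finset (Fin 4), ((-1 : ℂ) ^ T.card * Tt T ψ) =
      (fun k : ℕ => (-1 : ℂ) ^ k *
        (if k = 2 then 4⁻¹ else if k = 1 ∨ k = 3 then 2⁻¹ else 1)) T.card := by
    intro T
    have hle : T.card ≤ 4 := by
      have := Finset.card_le_univ T
      simpa using this
    have h5 : T.card = 0 ∨ T.card = 1 ∨ T.card = 2 ∨ T.card = 3 ∨ T.card = 4 := by omega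
    rcases h5 with h | h | h | h | h
    · rw [Tt_card0 hA h, h]; norm_num
    · rw [Tt_card1 hA h, h]; norm_num
    · rw [Tt_card2 hA h, h]; norm_num
    · rw [Tt_card3 hA h, h]; norm_num
    · rw [Tt_card4 hA h, h]; norm_num
  rw [Finset.sum_congr rfl fun T _ => hval T]
  rw [← Finset.powerset_univ, Finset.sum_powerset]
  have hcard : (Finset.univ : Finset (Fin 4)).card = 4 := by simp
  rw [hcard]
  have hblock : ∀ k ∈ Finset.range 5,
      (∑ T ∈ Finset.powersetCard k (Finset.univ : Finset (Fin 4)),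
        (fun m : ℕ => (-1 : ℂ) ^ m *
          (if m = 2 then 4⁻¹ else if m = 1 ∨ m = 3 then 2⁻¹ else 1)) T.card) =
      (Nat.choose 4 k : ℂ) * ((-1 : ℂ) ^ k *
          (if k = 2 then 4⁻¹ else if k = 1 ∨ k = 3 then 2⁻¹ else 1)) := by
    intro k _
    rw [Finset.sum_congr rfl fun T hT => by
      rw [(Finset.mem_powersetCard.mp hT).2]]
    rw [Finset.sum_const, Finset.card_powersetCard, hcard, nsmul_eq_mul]
  rw [Finset.sum_congr rfl hblock]
  simp only [Finset.sum_range_succ, Finset.sum_range_zero]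
  norm_num [Nat.choose]

end HS

/-- Higuchi–Sudbery: no `AME(4,2)` state exists: there is no 4-qubit pure
state all of whose two-qubit reductions are maximally mixed. -/
theorem no_AME_4_2 : ¬ ∃ ψ : (Fin 4 → Fin 2) → ℂ, IsAME ψ := by
  rintro ⟨ψ, hA⟩
  have h1 := HS.main_id ψ
  rw [HS.final_sum hA, Complex.mul_conj] at h1
  have h3 : Complex.normSq (HS.Z ψ) = -2⁻¹ := by
    have : ((Complex.normSq (HS.Z ψ) : ℝ) : ℂ) = ((-2⁻¹ : ℝ) : ℂ) := by
      rw [← h1]; norm_num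
    exact_mod_cast this
  have h4 := Complex.normSq_nonneg (HS.Z ψ)
  rw [h3] at h4
  norm_num at h4
end
end
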